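/- Let f(y) = ½y² (the case ε = +1, i.e. the manifold S_+). For P ∈ ℝ³ and v ∈ ℝ³, let γ_{P,v} : ℝ → ℝ³ be the unique solution of the geodesic system x'' = 0, x̃'' = 2 y x' y', y'' = -y (x')² with γ_{P,v}(0) = P and γ_{P,v}'(0) = v (this solution is defined on all of ℝ). Then for every P ∈ ℝ³ the exponential map E_P : ℝ³ → ℝ³ given by E_P(v) := γ_{P,v}(1) is not surjective. -/

import Mathlib

/-!
Aim at the point `(x₀ + π, x̃₀, 1 - y₀)`. Along any geodesic `x'` is constant, so hitting it at
time `1` forces `x' ≡ π`, and then `y'' = -π² y`. For that oscillator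
`π y(t) cos(πt) - y'(t) sin(πt)` is conserved, which at `t = 1` gives `y(1) = -y₀ ≠ 1 - y₀`.
-/

open Real

lemma eq_of_forall_hasDerivAt_zero {f : ℝ → ℝ} (hf : ∀ t, HasDerivAt f 0 t) (a b : ℝ) :
    f a = f b :=
  is_const_of_deriv_eq_zero (fun t => (hf t).differentiableAt) (fun t => (hf t).deriv) a b

lemma eq_add_mul_of_forall_hasDerivAt_const {f : ℝ → ℝ} {c : ℝ} (hf : ∀ t, HasDerivAt f c t)
    (t : ℝ) : f t = f 0 + c * t := by
  have hg : ∀ s, HasDerivAt (fun s => f s - c * s) 0 s := fun s =>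
    ((hf s).sub ((hasDerivAt_id' s).const_mul c)).congr_deriv (by ring)
  linarith [eq_of_forall_hasDerivAt_zero hg t 0]

section Oscillator

variable {ω : ℝ} {y y' : ℝ → ℝ}

lemma oscillator_sin_wronskian_eq (hy : ∀ t, HasDerivAt y (y' t) t)
    (hy' : ∀ t, HasDerivAt y' (-(y t * ω ^ 2)) t) (t : ℝ) :
    ω * y t * cos (ω * t) - y' t * sin (ω * t) = ω * y 0 := by
  have hW : ∀ s, HasDerivAt (fun s => ω * y s * cos (ω * s) - y' s * sin (ω * s)) 0 s := by
    intro s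
    have hωs : HasDerivAt (fun s => ω * s) ω s :=
      ((hasDerivAt_id' s).const_mul ω).congr_deriv (mul_one ω)
    exact ((((hy s).const_mul ω).mul hωs.cos).sub ((hy' s).mul hωs.sin)).congr_deriv (by ring)
  simpa using eq_of_forall_hasDerivAt_zero hW t 0

lemma oscillator_apply_pi_div (hy : ∀ t, HasDerivAt y (y' t) t)
    (hy' : ∀ t, HasDerivAt y' (-(y t * ω ^ 2)) t) (hω : ω ≠ 0) :
    y (π / ω) = -y 0 := by
  have h := oscillator_sin_wronskian_eq hy hy' (π / ω)
  rw [mul_div_cancel₀ π hω, cos_pi, sin_pi] at h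
  apply mul_left_cancel₀ hω
  linarith

end Oscillator

theorem S_plus_exponential_map_not_surjective_general
    (X XT Y X' XT' Y' : (ℝ × ℝ × ℝ) → (ℝ × ℝ × ℝ) → ℝ → ℝ)
    (hX : ∀ P v t, HasDerivAt (X P v) (X' P v t) t)
    (hX' : ∀ P v t, HasDerivAt (X' P v) 0 t)
    (hY : ∀ P v t, HasDerivAt (Y P v) (Y' P v t) t)
    (hY' : ∀ P v t, HasDerivAt (Y' P v) (-(Y P v t * (X' P v t) ^ 2)) t)
    (hinit : ∀ P v : ℝ × ℝ × ℝ,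
      X P v 0 = P.1 ∧ XT P v 0 = P.2.1 ∧ Y P v 0 = P.2.2 ∧
      X' P v 0 = v.1 ∧ XT' P v 0 = v.2.1 ∧ Y' P v 0 = v.2.2)
    (E : (ℝ × ℝ × ℝ) → (ℝ × ℝ × ℝ) → (ℝ × ℝ × ℝ))
    (hE : ∀ P v, E P v = (X P v 1, XT P v 1, Y P v 1)) :
    ∀ P, ¬ Function.Surjective (E P) := by
  intro P hsurj
  obtain ⟨v, hv⟩ := hsurj (P.1 + π, P.2.1, 1 - P.2.2)
  obtain ⟨hX0, -, hY0, hX'0, -, -⟩ := hinit P v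
  rw [hE, Prod.mk.injEq, Prod.mk.injEq] at hv
  obtain ⟨hX1, -, hY1⟩ := hv
  have hX'_const : ∀ t, X' P v t = v.1 := fun t => by
    rw [eq_of_forall_hasDerivAt_zero (hX' P v) t 0, hX'0]
  have hv₁ : v.1 = π := by
    have := eq_add_mul_of_forall_hasDerivAt_const (fun t => hX'_const t ▸ hX P v t) 1
    linarith
  have hY'π : ∀ t, HasDerivAt (Y' P v) (-(Y P v t * π ^ 2)) t := fun t => by
    simpa only [hX'_const, hv₁] using hY' P v t
  have hY1' := oscillator_apply_pi_div (hY P v) hY'π pi_ne_zero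
  rw [div_self pi_ne_zero] at hY1'
  linarith

/-- For the manifold `S_+` (i.e. `f(y) = ½y²`), the exponential map at every point is
not surjective.  Here `(X P v, XT P v, Y P v) : ℝ → ℝ³` is the unique global solution
of the geodesic system `x'' = 0`, `x̃'' = 2 y x' y'`, `y'' = -y (x')²` with initial
position `P` and initial velocity `v` at `t = 0`, and the exponential map is
`E P v = (X P v 1, XT P v 1, Y P v 1)`. -/
theorem S_plus_exponential_map_not_surjective
    (X XT Y X' XT' Y' : (ℝ × ℝ × ℝ) → (ℝ × ℝ × ℝ) → ℝ → ℝ)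
    (hX : ∀ P v t, HasDerivAt (X P v) (X' P v t) t)
    (hX' : ∀ P v t, HasDerivAt (X' P v) 0 t)
    (hXT : ∀ P v t, HasDerivAt (XT P v) (XT' P v t) t)
    (hXT' : ∀ P v t, HasDerivAt (XT' P v) (2 * Y P v t * X' P v t * Y' P v t) t)
    (hY : ∀ P v t, HasDerivAt (Y P v) (Y' P v t) t)
    (hY' : ∀ P v t, HasDerivAt (Y' P v) (-(Y P v t * (X' P v t) ^ 2)) t)
    (hinit : ∀ P v : ℝ × ℝ × ℝ,
      X P v 0 = P.1 ∧ XT P v 0 = P.2.1 ∧ Y P v 0 = P.2.2 ∧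
      X' P v 0 = v.1 ∧ XT' P v 0 = v.2.1 ∧ Y' P v 0 = v.2.2)
    (E : (ℝ × ℝ × ℝ) → (ℝ × ℝ × ℝ) → (ℝ × ℝ × ℝ))
    (hE : ∀ P v, E P v = (X P v 1, XT P v 1, Y P v 1)) :
    ∀ P, ¬ Function.Surjective (E P) :=
  S_plus_exponential_map_not_surjective_general X XT Y X' XT' Y' hX hX' hY hY' hinit E hE
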